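/- For every ϑ ∈ 𝒮 different from the two sequences (1, 0, 0, …) and (2^{−1}, 2^{−2}, 2^{−3}, …), the function s ↦ H(ϑ; s) is strictly convex on the interval (−1, ∞). If ϑ is equal to one of these two sequences, then H(ϑ; s) = 1 for all s > −1. -/

import Mathlib

open Filter Topology

noncomputable section

namespace GreedyEnergy

/-- Decreasing list `n₁ > n₂ > ⋯ > n_p` of the binary exponents of `N`,
so that `N = 2^{n₁} + ⋯ + 2^{n_p}` with `n₁ > n₂ > ⋯ > n_p ≥ 0`. -/
def binExps (N : ℕ) : List ℕ :=
  ((List.range (N + 1)).filter fun i => N.testBit i).reverse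

/-- The number `p = τ_b(N)` of ones in the binary expansion of `N`. -/
def pbin (N : ℕ) : ℕ := (binExps N).length

/-- `η(N)` viewed as an infinite sequence (0-indexed): the entry of index `k`
is `θ_{k+1} = 2^{n_{k+1}}/N` for `k < p`, and `0` for `k ≥ p`. -/
def eta (N : ℕ) : ℕ → ℝ :=
  fun k => ((binExps N).map fun n => (2 : ℝ) ^ n / (N : ℝ)).getD k 0

/-- `H(θ; s)` for a finite vector of length `p` given (0-indexed) by `θ : ℕ → ℝ`:
`H(θ;s) = Σ_{k=1}^p θ_k^{s+1} + 2(2^s − 1) Σ_{k=1}^{p−1} θ_k^s Σ_{j=k+1}^p θ_j`. -/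
def Hvec (θ : ℕ → ℝ) (p : ℕ) (s : ℝ) : ℝ :=
  (∑ k ∈ Finset.range p, θ k ^ (s + 1)) +
    2 * ((2 : ℝ) ^ s - 1) *
      ∑ k ∈ Finset.range p, θ k ^ s * ∑ j ∈ Finset.Ico (k + 1) p, θ j

/-- `K(θ) = 2 log 2 + Σ_{k=1}^p θ_k² log(θ_k/4) + 2 Σ_{k=1}^{p−1} (Σ_{j=k+1}^p θ_j) θ_k log θ_k`. -/
def Kvec (θ : ℕ → ℝ) (p : ℕ) : ℝ :=
  2 * Real.log 2 + (∑ k ∈ Finset.range p, θ k ^ 2 * Real.log (θ k / 4)) +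
    2 * ∑ k ∈ Finset.range p, (∑ j ∈ Finset.Ico (k + 1) p, θ j) * (θ k * Real.log (θ k))

/-- `R(θ) = −(2 log 2) Σ_{k=1}^p (k−1) θ_k − Σ_{k=1}^p θ_k log θ_k` (0-indexed: `k−1 ↦ k`). -/
def Rvec (θ : ℕ → ℝ) (p : ℕ) : ℝ :=
  -(2 * Real.log 2) * (∑ k ∈ Finset.range p, (k : ℝ) * θ k) -
    ∑ k ∈ Finset.range p, θ k * Real.log (θ k)

/-- `G(θ; s) = Σ_{k=1}^p θ_k^s`. -/
def Gvec (θ : ℕ → ℝ) (p : ℕ) (s : ℝ) : ℝ := ∑ k ∈ Finset.range p, θ k ^ s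

/-- `Λ(θ) = Σ_{k=1}^p θ_k log θ_k`. -/
def Λvec (θ : ℕ → ℝ) (p : ℕ) : ℝ := ∑ k ∈ Finset.range p, θ k * Real.log (θ k)

/-- `H(η(N); s)`. -/
def Heta (N : ℕ) (s : ℝ) : ℝ := Hvec (eta N) (pbin N) s

/-- `K(η(N))`. -/
def Keta (N : ℕ) : ℝ := Kvec (eta N) (pbin N)

/-- `R(η(N))`. -/
def Reta (N : ℕ) : ℝ := Rvec (eta N) (pbin N)

/-- `G(η(N); s)`. -/
def Geta (N : ℕ) (s : ℝ) : ℝ := Gvec (eta N) (pbin N) s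

/-- `Λ(η(N))`. -/
def Λeta (N : ℕ) : ℝ := Λvec (eta N) (pbin N)

/-- The set `𝒮` of infinite sequences `ϑ` for which there is a strictly increasing
sequence of positive integers `N_m` with `ϑ_j = lim_m (η(N_m))_j` for every `j`. -/
def Sset : Set (ℕ → ℝ) :=
  {ϑ | ∃ Nm : ℕ → ℕ, StrictMono Nm ∧ (∀ m, 1 ≤ Nm m) ∧
        ∀ j, Tendsto (fun m => eta (Nm m) j) atTop (𝓝 (ϑ j))}

/-- `H(ϑ; s)` for an infinite sequence `ϑ` (0-indexed). The conventions
`ϑ_n log ϑ_n = 0` and `ϑ_n^s ϑ_j = 0` when `ϑ_n = 0` hold automatically,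
since `Real.log 0 = 0` and `(0:ℝ) ^ s = 0` for `s ≠ 0` (and the factor
`2^s − 1` vanishes when `s = 0`). -/
def Hinf (ϑ : ℕ → ℝ) (s : ℝ) : ℝ :=
  (∑' n : ℕ, ϑ n ^ (s + 1)) +
    2 * ((2 : ℝ) ^ s - 1) * ∑' n : ℕ, ϑ n ^ s * ∑' j : ℕ, ϑ (n + 1 + j)

/-- `K(ϑ)` for an infinite sequence `ϑ`. -/
def Kinf (ϑ : ℕ → ℝ) : ℝ :=
  2 * Real.log 2 + (∑' n : ℕ, ϑ n ^ 2 * Real.log (ϑ n / 4)) +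
    2 * ∑' n : ℕ, (∑' j : ℕ, ϑ (n + 1 + j)) * (ϑ n * Real.log (ϑ n))

/-- `R(ϑ)` for an infinite sequence `ϑ` (0-indexed: `n−1 ↦ n`). -/
def Rinf (ϑ : ℕ → ℝ) : ℝ :=
  -(2 * Real.log 2) * (∑' n : ℕ, (n : ℝ) * ϑ n) - ∑' n : ℕ, ϑ n * Real.log (ϑ n)

/-- The set of limit points of a real sequence: values of convergent subsequences. -/
def limitPoints (x : ℕ → ℝ) : Set ℝ :=
  {L | ∃ φ : ℕ → ℕ, StrictMono φ ∧ Tendsto (fun m => x (φ m)) atTop (𝓝 L)}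

/-- The Riesz `s`-kernel: `k_s(z,w) = |z−w|^{−s}` for `s ≠ 0`, `k_0(z,w) = −log|z−w|`. -/
def kernel (s : ℝ) (z w : ℂ) : ℝ :=
  if s = 0 then -Real.log (‖z - w‖) else ‖z - w‖ ^ (-s)

/-- The Riesz `s`-energy `E_s(a_0, …, a_{N−1}) = Σ_{i ≠ j} k_s(a_i, a_j)`. -/
def energy (s : ℝ) (a : ℕ → ℂ) (N : ℕ) : ℝ :=
  ∑ i ∈ Finset.range N, ∑ j ∈ Finset.range N,
    if i ≠ j then kernel s (a i) (a j) else 0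

/-- The potential `U_{N,s}(z) = Σ_{ℓ=0}^{N−1} k_s(z, a_ℓ)`. -/
def pot (s : ℝ) (a : ℕ → ℂ) (N : ℕ) (z : ℂ) : ℝ :=
  ∑ l ∈ Finset.range N, kernel s z (a l)

/-- A greedy `s`-energy sequence on the unit circle: all points lie on `S¹`, and for
every `N ≥ 1` the point `a_N` minimizes (if `s ≥ 0`) resp. maximizes (if `s < 0`)
the potential `U_{N,s}` over `S¹`. -/
def IsGreedy (s : ℝ) (a : ℕ → ℂ) : Prop :=
  (∀ n, ‖a n‖ = 1) ∧
    ∀ N, 1 ≤ N →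
      ((0 ≤ s → ∀ z : ℂ, ‖z‖ = 1 → pot s a N (a N) ≤ pot s a N z) ∧
        (s < 0 → ∀ z : ℂ, ‖z‖ = 1 → pot s a N z ≤ pot s a N (a N)))

/-- `I_s(σ) = 2^{−s} Γ((1−s)/2) / (√π Γ(1 − s/2))`. -/
def Isigma (s : ℝ) : ℝ :=
  (2 : ℝ) ^ (-s) / Real.sqrt Real.pi * (Real.Gamma ((1 - s) / 2) / Real.Gamma (1 - s / 2))

/-- The value `ζ(s)` of the Riemann zeta function at a real `s` (real part of the
analytically continued zeta function). -/
def zetaR (s : ℝ) : ℝ := (riemannZeta (s : ℂ)).re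


/-!
Every `ϑ ∈ 𝒮` is a *dyadic profile*: it is nonnegative, sums to `1`, and consecutive entries
satisfy either `2 ϑ_{n+1} = ϑ_n` or `4 ϑ_{n+1} ≤ ϑ_n`. Each `η(N)` has these properties, and they
survive pointwise limits because the tails `Σ_{k ≥ K} ϑ_k ≤ 2^{1-K}` are uniformly small.

With `T_n = Σ_{j > n} ϑ_j`, the `n`-th summand of `H(ϑ; s)` is
`(ϑ_n - 2 T_n) ϑ_n^s + 2 T_n (2 ϑ_n)^s`. Pairing the first part at `n` with the second part at
`n + 1` writes `H(ϑ; s)` as a sum of blocks plus the single term `2 T_0 (2 ϑ_0)^s`. A block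
vanishes when `2 ϑ_{n+1} = ϑ_n`, and otherwise both its coefficients are nonnegative (because
`T_n ≤ 2 ϑ_{n+1} ≤ ϑ_n / 2`), so every block is convex in `s`. The last term is strictly convex
unless `T_0 = 0` or `2 ϑ_0 = 1`, and these force `ϑ = (1, 0, 0, …)` resp. `ϑ = (1/2, 1/4, …)`.
-/

theorem two_pow_dichotomy {a b : ℕ} (h : b < a) :
    2 * (2 : ℝ) ^ b = 2 ^ a ∨ 4 * (2 : ℝ) ^ b ≤ 2 ^ a := by
  rcases (Nat.succ_le_of_lt h).eq_or_lt with rfl | h'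
  · left; rw [pow_succ, mul_comm]
  · right
    calc 4 * (2 : ℝ) ^ b = 2 ^ (b + 2) := by ring
      _ ≤ 2 ^ a := pow_le_pow_right₀ one_le_two h'

theorem convexOn_mul_rpow_left {c b : ℝ} (hc : 0 ≤ c) (hcb : c ≤ b) :
    ConvexOn ℝ Set.univ fun x : ℝ => c * b ^ x := by
  rcases hc.eq_or_lt with rfl | hc
  · simpa using convexOn_const (0 : ℝ) (convex_univ (𝕜 := ℝ))
  · exact (convexOn_rpow_left (hc.trans_le hcb)).smul hc.le

theorem strictConvexOn_mul_rpow_left {c b : ℝ} (hc : 0 < c) (hb : 0 < b) (hb1 : b ≠ 1) :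
    StrictConvexOn ℝ Set.univ fun x : ℝ => c * b ^ x := by
  refine ⟨convex_univ, fun x _ y _ hxy p q hp hq hpq => ?_⟩
  have hlog : Real.log b ≠ 0 := Real.log_ne_zero_of_pos_of_ne_one hb hb1
  have hexp := strictConvexOn_exp.2 (Set.mem_univ (Real.log b * x)) (Set.mem_univ (Real.log b * y))
    (by simpa [hlog] using hxy) hp hq hpq
  simp only [smul_eq_mul, Real.rpow_def_of_pos hb] at hexp ⊢
  calc c * Real.exp (Real.log b * (p * x + q * y))
      = c * Real.exp (p * (Real.log b * x) + q * (Real.log b * y)) := by ring_nf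
    _ < c * (p * Real.exp (Real.log b * x) + q * Real.exp (Real.log b * y)) := by gcongr
    _ = p * (c * Real.exp (Real.log b * x)) + q * (c * Real.exp (Real.log b * y)) := by ring

theorem convexOn_tsum {ι E : Type*} [AddCommMonoid E] [Module ℝ E] {s : Set E}
    {f : ι → E → ℝ} (hs : Convex ℝ s) (hf : ∀ i, ConvexOn ℝ s (f i))
    (hsum : ∀ x ∈ s, Summable fun i => f i x) : ConvexOn ℝ s fun x => ∑' i, f i x := by
  refine ⟨hs, fun x hx y hy a b ha hb hab => ?_⟩
  simp only [smul_eq_mul]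
  calc ∑' i, f i (a • x + b • y) ≤ ∑' i, (a * f i x + b * f i y) :=
        Summable.tsum_le_tsum (fun i => (hf i).2 hx hy ha hb hab) (hsum _ (hs hx hy ha hb hab))
          (((hsum x hx).mul_left a).add ((hsum y hy).mul_left b))
    _ = a * ∑' i, f i x + b * ∑' i, f i y := by
        rw [((hsum x hx).mul_left a).tsum_add ((hsum y hy).mul_left b), tsum_mul_left,
          tsum_mul_left]

theorem hasSum_half_pow_succ : HasSum (fun n : ℕ => (2⁻¹ : ℝ) ^ (n + 1)) 1 := by
  simpa [pow_succ', div_eq_mul_inv, mul_comm] using hasSum_geometric_two' 1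

theorem binExps_eq_reverse_bitIndices (N : ℕ) : binExps N = N.bitIndices.reverse := by
  refine congrArg List.reverse ((List.pairwise_lt_range.filter _).sortedLT.eq_of_mem_iff
    Nat.bitIndices_sorted fun i => ?_)
  simp only [List.mem_filter, List.mem_range, Nat.mem_bitIndices, and_iff_right_iff_imp]
  intro h
  have := Nat.two_pow_le_of_mem_bitIndices (Nat.mem_bitIndices.2 h)
  have := i.lt_two_pow_self
  omega

theorem binExps_sortedGT (N : ℕ) : (binExps N).SortedGT := by
  rw [binExps_eq_reverse_bitIndices]
  exact Nat.bitIndices_sorted.reverse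

theorem sum_map_two_pow_binExps (N : ℕ) : ((binExps N).map fun n => (2 : ℝ) ^ n).sum = N := by
  rw [binExps_eq_reverse_bitIndices, List.map_reverse, List.sum_reverse,
    ← Nat.sum_map_two_pow_bitIndices N, Nat.cast_list_sum, List.map_map]
  simp [Function.comp_def]

theorem eta_of_lt {N k : ℕ} (hk : k < (binExps N).length) :
    eta N k = 2 ^ (binExps N)[k] / N := by
  unfold eta
  rw [List.getD_eq_getElem _ _ (by simpa using hk), List.getElem_map]

theorem eta_of_le {N k : ℕ} (hk : (binExps N).length ≤ k) : eta N k = 0 :=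
  List.getD_eq_default _ _ (by simpa using hk)

theorem eta_nonneg (N k : ℕ) : 0 ≤ eta N k := by
  rcases lt_or_ge k (binExps N).length with hk | hk
  · rw [eta_of_lt hk]; positivity
  · rw [eta_of_le hk]

theorem hasSum_eta {N : ℕ} (hN : N ≠ 0) : HasSum (eta N) 1 := by
  have hsum : ∑ k ∈ Finset.range (binExps N).length, eta N k = 1 := by
    rw [Finset.sum_range, Finset.sum_congr rfl fun i _ => eta_of_lt i.2, ← Finset.sum_div,
      Fin.sum_univ_fun_getElem (binExps N) fun n => (2 : ℝ) ^ n, sum_map_two_pow_binExps]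
    exact div_self (Nat.cast_ne_zero.2 hN)
  exact hsum ▸ hasSum_sum_of_ne_finset_zero fun _ hk =>
    eta_of_le (not_lt.1 (Finset.mem_range.not.1 hk))

theorem eta_dichotomy (N k : ℕ) :
    2 * eta N (k + 1) = eta N k ∨ 4 * eta N (k + 1) ≤ eta N k := by
  rcases lt_or_ge (k + 1) (binExps N).length with hk | hk
  · rw [eta_of_lt hk, eta_of_lt ((Nat.lt_add_one k).trans hk)]
    rcases two_pow_dichotomy ((binExps_sortedGT N).getElem_gt_getElem_of_lt (Nat.lt_add_one k))
      with h | h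
    · left; rw [← h, mul_div_assoc]
    · right; rw [← mul_div_assoc]; gcongr
  · right; rw [eta_of_le hk, mul_zero]; exact eta_nonneg N k

structure IsDyadicProfile (ϑ : ℕ → ℝ) : Prop where
  nonneg : ∀ n, 0 ≤ ϑ n
  dichotomy : ∀ n, 2 * ϑ (n + 1) = ϑ n ∨ 4 * ϑ (n + 1) ≤ ϑ n
  hasSum : HasSum ϑ 1

theorem isDyadicProfile_eta {N : ℕ} (hN : N ≠ 0) : IsDyadicProfile (eta N) :=
  ⟨eta_nonneg N, eta_dichotomy N, hasSum_eta hN⟩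

theorem isDyadicProfile_geometric : IsDyadicProfile fun n => 2⁻¹ ^ (n + 1) :=
  ⟨fun n => by positivity, fun n => Or.inl (by ring), hasSum_half_pow_succ⟩

def tailSum (ϑ : ℕ → ℝ) (n : ℕ) : ℝ := ∑' j, ϑ (n + 1 + j)

def Hblock (ϑ : ℕ → ℝ) (n : ℕ) (s : ℝ) : ℝ :=
  (ϑ n - 2 * tailSum ϑ n) * ϑ n ^ s + 2 * tailSum ϑ (n + 1) * (2 * ϑ (n + 1)) ^ s

namespace IsDyadicProfile

variable {ϑ : ℕ → ℝ} (hϑ : IsDyadicProfile ϑ)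
include hϑ

theorem summable : Summable ϑ := hϑ.hasSum.summable

theorem le_one (n : ℕ) : ϑ n ≤ 1 :=
  le_hasSum hϑ.hasSum n fun j _ => hϑ.nonneg j

theorem two_mul_succ_le (n : ℕ) : 2 * ϑ (n + 1) ≤ ϑ n := by
  rcases hϑ.dichotomy n with h | h
  · exact h.le
  · linarith [hϑ.nonneg (n + 1)]

theorem le_half_pow_mul (n j : ℕ) : ϑ (n + j) ≤ 2⁻¹ ^ j * ϑ n := by
  induction j with
  | zero => simp
  | succ j ih =>
    calc ϑ (n + j + 1) ≤ 2⁻¹ * ϑ (n + j) := by linarith [hϑ.two_mul_succ_le (n + j)]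
      _ ≤ 2⁻¹ * (2⁻¹ ^ j * ϑ n) := by gcongr
      _ = 2⁻¹ ^ (j + 1) * ϑ n := by ring

theorem le_half_pow (n : ℕ) : ϑ n ≤ 2⁻¹ ^ n := by
  simpa using (hϑ.le_half_pow_mul 0 n).trans
    (mul_le_of_le_one_right (by positivity) (hϑ.le_one 0))

theorem summable_add (n : ℕ) : Summable fun j => ϑ (n + j) :=
  (summable_nat_add_iff n).2 hϑ.summable |>.congr fun j => by rw [add_comm]

theorem tsum_add_le_two_mul (n : ℕ) : ∑' j, ϑ (n + j) ≤ 2 * ϑ n := by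
  calc ∑' j, ϑ (n + j) ≤ ∑' j : ℕ, 2⁻¹ ^ j * ϑ n :=
        Summable.tsum_le_tsum (hϑ.le_half_pow_mul n) (hϑ.summable_add n)
          (summable_geometric_two.mul_right _ |>.congr fun j => by rw [one_div, inv_pow])
    _ = 2 * ϑ n := by rw [tsum_mul_right, tsum_geometric_inv_two]

theorem sum_range_le_one (K : ℕ) : ∑ k ∈ Finset.range K, ϑ k ≤ 1 :=
  sum_le_hasSum _ (fun k _ => hϑ.nonneg k) hϑ.hasSum

theorem one_sub_le_sum_range (K : ℕ) : 1 - 2 * 2⁻¹ ^ K ≤ ∑ k ∈ Finset.range K, ϑ k := by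
  have hsplit := hϑ.summable.sum_add_tsum_nat_add K
  rw [hϑ.hasSum.tsum_eq] at hsplit
  have htail : ∑' j, ϑ (j + K) ≤ 2 * 2⁻¹ ^ K := by
    simp_rw [add_comm _ K]
    exact (hϑ.tsum_add_le_two_mul K).trans (by linarith [hϑ.le_half_pow K])
  linarith

theorem summable_rpow {t : ℝ} (ht : 0 < t) : Summable fun n => ϑ n ^ t := by
  refine Summable.of_nonneg_of_le (fun n => Real.rpow_nonneg (hϑ.nonneg n) t) (fun n => ?_)
    (summable_geometric_of_lt_one (Real.rpow_nonneg (by norm_num : (0 : ℝ) ≤ 2⁻¹) t)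
      (Real.rpow_lt_one (by norm_num) (by norm_num) ht))
  rw [Real.rpow_pow_comm (by norm_num)]
  exact Real.rpow_le_rpow (hϑ.nonneg n) (hϑ.le_half_pow n) ht.le

theorem tailSum_nonneg (n : ℕ) : 0 ≤ tailSum ϑ n :=
  tsum_nonneg fun _ => hϑ.nonneg _

theorem tailSum_le_two_mul_succ (n : ℕ) : tailSum ϑ n ≤ 2 * ϑ (n + 1) :=
  hϑ.tsum_add_le_two_mul (n + 1)

theorem tailSum_le (n : ℕ) : tailSum ϑ n ≤ ϑ n :=
  (hϑ.tailSum_le_two_mul_succ n).trans (hϑ.two_mul_succ_le n)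

theorem tailSum_eq_add (n : ℕ) : tailSum ϑ n = ϑ (n + 1) + tailSum ϑ (n + 1) := by
  rw [tailSum, (hϑ.summable_add (n + 1)).tsum_eq_zero_add]
  simp only [tailSum, add_zero, add_assoc, add_comm 1]

theorem add_tailSum_zero : ϑ 0 + tailSum ϑ 0 = 1 := by
  rw [← hϑ.hasSum.tsum_eq, hϑ.summable.tsum_eq_zero_add]
  simp only [tailSum, zero_add, add_comm 1]

theorem Hblock_eq_zero {n : ℕ} (h : 2 * ϑ (n + 1) = ϑ n) (s : ℝ) : Hblock ϑ n s = 0 := by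
  rw [Hblock, hϑ.tailSum_eq_add n, h]
  linear_combination -(ϑ n ^ s) * h

theorem convexOn_Hblock (n : ℕ) : ConvexOn ℝ Set.univ (Hblock ϑ n) := by
  rcases hϑ.dichotomy n with h | h
  · simpa [funext (hϑ.Hblock_eq_zero h)] using convexOn_const (0 : ℝ) (convex_univ (𝕜 := ℝ))
  · have hT := hϑ.tailSum_le_two_mul_succ n
    exact (convexOn_mul_rpow_left (by linarith) (by linarith [hϑ.tailSum_nonneg n])).add
      (convexOn_mul_rpow_left (by linarith [hϑ.tailSum_nonneg (n + 1)])
        (by linarith [hϑ.tailSum_le (n + 1)]))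

theorem hasSum_Hblock {s : ℝ} (hs : -1 < s) :
    HasSum (fun n => Hblock ϑ n s) (Hinf ϑ s - 2 * tailSum ϑ 0 * (2 * ϑ 0) ^ s) := by
  have hs1 : s + 1 ≠ 0 := by linarith
  have hu : Summable fun n => ϑ n ^ (s + 1) := hϑ.summable_rpow (by linarith)
  have hw : Summable fun n => ϑ n ^ s * tailSum ϑ n := by
    refine hu.of_nonneg_of_le (fun n => ?_) fun n => ?_
    · exact mul_nonneg (Real.rpow_nonneg (hϑ.nonneg n) s) (hϑ.tailSum_nonneg n)
    · rw [Real.rpow_add_one' (hϑ.nonneg n) hs1]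
      exact mul_le_mul_of_nonneg_left (hϑ.tailSum_le n) (Real.rpow_nonneg (hϑ.nonneg n) s)
  have hb_eq (n : ℕ) :
      2 * tailSum ϑ n * (2 * ϑ n) ^ s = 2 ^ (s + 1) * (ϑ n ^ s * tailSum ϑ n) := by
    rw [Real.mul_rpow zero_le_two (hϑ.nonneg n), Real.rpow_add_one two_ne_zero]
    ring
  have hb : Summable fun n => 2 * tailSum ϑ n * (2 * ϑ n) ^ s :=
    (hw.mul_left _).congr fun n => (hb_eq n).symm
  have hab (n : ℕ) : (ϑ n - 2 * tailSum ϑ n) * ϑ n ^ s + 2 * tailSum ϑ n * (2 * ϑ n) ^ s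
      = ϑ n ^ (s + 1) + 2 * ((2 : ℝ) ^ s - 1) * (ϑ n ^ s * tailSum ϑ n) := by
    rw [hb_eq, Real.rpow_add_one' (hϑ.nonneg n) hs1, Real.rpow_add_one two_ne_zero]
    ring
  have ha : Summable fun n => (ϑ n - 2 * tailSum ϑ n) * ϑ n ^ s :=
    ((hu.add (hw.mul_left (2 * ((2 : ℝ) ^ s - 1)))).sub hb).congr fun n => by linarith [hab n]
  have hH : Hinf ϑ s = (∑' n, (ϑ n - 2 * tailSum ϑ n) * ϑ n ^ s)
      + ∑' n, 2 * tailSum ϑ n * (2 * ϑ n) ^ s := by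
    rw [← ha.tsum_add hb, tsum_congr hab, hu.tsum_add (hw.mul_left _), tsum_mul_left]
    rfl
  have hblocks : HasSum (fun n => Hblock ϑ n s) ((∑' n, (ϑ n - 2 * tailSum ϑ n) * ϑ n ^ s)
      + ∑' n, 2 * tailSum ϑ (n + 1) * (2 * ϑ (n + 1)) ^ s) :=
    ha.hasSum.add ((summable_nat_add_iff 1).2 hb).hasSum
  convert hblocks using 1
  rw [hH, hb.tsum_eq_zero_add]
  ring

theorem strictConvexOn_Hinf (hT : 0 < tailSum ϑ 0) (h2 : 2 * ϑ 0 ≠ 1) :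
    StrictConvexOn ℝ (Set.Ioi (-1 : ℝ)) (Hinf ϑ) := by
  have hsub := Set.subset_univ (Set.Ioi (-1 : ℝ))
  have hblocks : ConvexOn ℝ (Set.Ioi (-1 : ℝ)) fun s => ∑' n, Hblock ϑ n s :=
    convexOn_tsum (convex_Ioi _) (fun n => (hϑ.convexOn_Hblock n).subset hsub (convex_Ioi _))
      fun _ hs => (hϑ.hasSum_Hblock hs).summable
  have hlast : StrictConvexOn ℝ (Set.Ioi (-1 : ℝ)) fun s => 2 * tailSum ϑ 0 * (2 * ϑ 0) ^ s :=
    (strictConvexOn_mul_rpow_left (by positivity) (by linarith [hϑ.tailSum_le 0]) h2).subset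
      hsub (convex_Ioi _)
  refine (hblocks.add_strictConvexOn hlast).congr fun s hs => ?_
  simp only [Pi.add_apply, (hϑ.hasSum_Hblock hs).tsum_eq, sub_add_cancel]

theorem eq_single_of_tailSum_eq_zero (h : tailSum ϑ 0 = 0) :
    ϑ = fun n => if n = 0 then 1 else 0 := by
  funext n
  rcases n with _ | n
  · simpa [h] using hϑ.add_tailSum_zero
  · have hle : ϑ (0 + 1 + n) ≤ tailSum ϑ 0 :=
      (hϑ.summable_add 1).le_tsum n fun _ _ => hϑ.nonneg _
    rw [h, zero_add, add_comm] at hle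
    simpa using le_antisymm hle (hϑ.nonneg _)

theorem eq_geometric_of_two_mul_eq_one (h : 2 * ϑ 0 = 1) : ϑ = fun n => 2⁻¹ ^ (n + 1) := by
  have hle (n : ℕ) : ϑ n ≤ 2⁻¹ ^ (n + 1) := by
    simpa [pow_succ, show ϑ 0 = 2⁻¹ by linarith] using hϑ.le_half_pow_mul 0 n
  by_contra hne
  obtain ⟨n, hn⟩ := Function.ne_iff.1 hne
  exact lt_irrefl _ (hasSum_lt hle ((hle n).lt_of_ne hn) hϑ.hasSum hasSum_half_pow_succ)

end IsDyadicProfile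

theorem IsDyadicProfile.of_tendsto {ι : Type*} {l : Filter ι} [l.NeBot] {ψ : ι → ℕ → ℝ}
    {ϑ : ℕ → ℝ} (hψ : ∀ i, IsDyadicProfile (ψ i))
    (hlim : ∀ n, Tendsto (fun i => ψ i n) l (𝓝 (ϑ n))) : IsDyadicProfile ϑ := by
  have hnonneg (n : ℕ) : 0 ≤ ϑ n :=
    ge_of_tendsto (hlim n) (Eventually.of_forall fun i => (hψ i).nonneg n)
  have hsum (K : ℕ) : Tendsto (fun i => ∑ k ∈ Finset.range K, ψ i k) l
      (𝓝 (∑ k ∈ Finset.range K, ϑ k)) :=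
    tendsto_finsetSum _ fun k _ => hlim k
  refine ⟨hnonneg, fun n => ?_, ?_⟩
  · refine (le_or_gt (4 * ϑ (n + 1)) (ϑ n)).elim Or.inr fun hlt => Or.inl ?_
    -- Near the limit the second alternative fails for `ψ i`, so the first one holds.
    have hev := (hlim n).eventually_lt ((hlim (n + 1)).const_mul 4) hlt
    refine tendsto_nhds_unique ((hlim (n + 1)).const_mul 2) ((hlim n).congr' ?_)
    filter_upwards [hev] with i hi
    exact (((hψ i).dichotomy n).resolve_right (not_le.2 hi)).symm
  · rw [hasSum_iff_tendsto_nat_of_nonneg hnonneg]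
    refine tendsto_of_tendsto_of_tendsto_of_le_of_le ?_ tendsto_const_nhds
      (fun K => ge_of_tendsto (hsum K) (.of_forall fun i => (hψ i).one_sub_le_sum_range K))
      (fun K => le_of_tendsto (hsum K) (.of_forall fun i => (hψ i).sum_range_le_one K))
    simpa using ((tendsto_pow_atTop_nhds_zero_of_lt_one (by norm_num : (0 : ℝ) ≤ 2⁻¹)
      (by norm_num)).const_mul 2).const_sub 1

theorem IsDyadicProfile.of_mem_Sset {ϑ : ℕ → ℝ} (hϑ : ϑ ∈ Sset) : IsDyadicProfile ϑ := by
  obtain ⟨Nm, -, hNm, hlim⟩ := hϑ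
  exact .of_tendsto (fun m => isDyadicProfile_eta (Nat.one_le_iff_ne_zero.1 (hNm m))) hlim

theorem Hinf_single {s : ℝ} (hs : -1 < s) : Hinf (fun n => if n = 0 then 1 else 0) s = 1 := by
  have hs1 : s + 1 ≠ 0 := by linarith
  simp [Hinf, apply_ite (· ^ (s + 1)), Real.zero_rpow hs1]

theorem Hinf_geometric {s : ℝ} (hs : -1 < s) : Hinf (fun n => 2⁻¹ ^ (n + 1)) s = 1 := by
  have hgeom := isDyadicProfile_geometric
  have hT : tailSum (fun n => 2⁻¹ ^ (n + 1)) 0 = 2⁻¹ := by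
    linarith [hgeom.add_tailSum_zero]
  have hblocks := hgeom.hasSum_Hblock hs
  simp only [hgeom.Hblock_eq_zero (by ring), hT] at hblocks
  norm_num at hblocks
  linarith [hblocks.unique hasSum_zero]

theorem stmt15 (ϑ : ℕ → ℝ) (hϑ : ϑ ∈ Sset) :
    ((ϑ ≠ (fun n => if n = 0 then (1 : ℝ) else 0) ∧
        ϑ ≠ (fun n => ((2 : ℝ))⁻¹ ^ (n + 1))) →
      StrictConvexOn ℝ (Set.Ioi (-1 : ℝ)) (fun s => Hinf ϑ s)) ∧
    ((ϑ = (fun n => if n = 0 then (1 : ℝ) else 0) ∨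
        ϑ = (fun n => ((2 : ℝ))⁻¹ ^ (n + 1))) →
      ∀ s : ℝ, -1 < s → Hinf ϑ s = 1) := by
  refine ⟨fun ⟨hsingle, hgeom⟩ => ?_, ?_⟩
  · have hprof := IsDyadicProfile.of_mem_Sset hϑ
    refine hprof.strictConvexOn_Hinf ?_ fun h => hgeom (hprof.eq_geometric_of_two_mul_eq_one h)
    exact (hprof.tailSum_nonneg 0).lt_of_ne fun h =>
      hsingle (hprof.eq_single_of_tailSum_eq_zero h.symm)
  · rintro (rfl | rfl) s hs
    · exact Hinf_single hs
    · exact Hinf_geometric hs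

end GreedyEnergy
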